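/- arXiv:0705.2441 — 3 statements merged into one kernel-verified Lean document; each statement's English description precedes it below -/
import Mathlib

section
/- If $J$ is an ideal of $L[x_1,\ldots,x_n]$ and $p = (p_1,\ldots,p_n) \in V(J)$ with all $p_i \neq 0$, then $-\mathrm{val}(p) = (-\mathrm{val}(p_1),\ldots,-\mathrm{val}(p_n))$ lies in the tropical variety $\mathrm{Trop}(J)$. -/
open HahnSeries

variable (K : Type*) [Field K]

/-- The additive map `ℤ →+ ℚ`, `z ↦ z/(N+1)`, rescaling exponents. -/
noncomputable def divNHom (N : ℕ) : ℤ →+ ℚ where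
  toFun z := (z : ℚ) / (N + 1)
  map_zero' := by simp
  map_add' x y := by push_cast; ring

lemma divNHom_inj (N : ℕ) : Function.Injective (divNHom N) := by
  intro a b h
  have : (a : ℚ) / (N + 1) = (b : ℚ) / (N + 1) := h
  field_simp at this
  exact_mod_cast this

lemma divNHom_le (N : ℕ) : ∀ g g' : ℤ, divNHom N g ≤ divNHom N g' ↔ g ≤ g' := by
  intro g g'
  have h : (0 : ℚ) < N + 1 := by positivity
  constructor
  · intro hle
    have := (div_le_div_iff_of_pos_right h).mp hle
    exact_mod_cast this
  · intro hle
    exact (div_le_div_iff_of_pos_right h).mpr (by exact_mod_cast hle)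

/-- The embedding of the Laurent series field `K((t))` into Hahn series with
rational exponents, sending `t ↦ t^{1/(N+1)}`. -/
noncomputable def laurentToHahn (N : ℕ) : LaurentSeries K →+* HahnSeries ℚ K :=
  HahnSeries.embDomainRingHom (divNHom N) (divNHom_inj N) (divNHom_le N)

/-- The subfield `L_{N+1} = K((t^{1/(N+1)}))` of the Hahn series field. -/
noncomputable def PuiseuxN (N : ℕ) : Subfield (HahnSeries ℚ K) :=
  (laurentToHahn K N).fieldRange

/-- The field of Puiseux series `K{{t}} = ⋃_N K((t^{1/N}))`, realised as a
subfield of the Hahn series field `K[[ℚ]]`. -/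
noncomputable def Puiseux : Subfield (HahnSeries ℚ K) :=
  ⨆ N : ℕ, PuiseuxN K N

variable {K} {n : ℕ}

/-- The `(-1,ω)`-weighted degree of a term with exponent vector `β` and Puiseux
series coefficient `c` (`t` has weight `-1`, `xᵢ` has weight `ωᵢ`). -/
noncomputable def wdeg (ω : Fin n → ℝ) (β : Fin n →₀ ℕ) (c : Puiseux K) : ℝ :=
  (∑ i, ω i * (β i : ℝ)) - ((c.val.order : ℚ) : ℝ)

/-- The `t`-initial form `tin_ω(f) ∈ K[x]` of `f ∈ L[x]`: the terms of maximal
`(-1,ω)`-weighted degree with `t` set to `1`. -/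
noncomputable def tin (ω : Fin n → ℝ) (f : MvPolynomial (Fin n) (Puiseux K)) :
    MvPolynomial (Fin n) K :=
  ∑ β ∈ f.support.filter
      (fun β => ∀ β' ∈ f.support, wdeg ω β' (f.coeff β') ≤ wdeg ω β (f.coeff β)),
    MvPolynomial.monomial β
      ((f.coeff β).val.coeff ((f.coeff β).val.order))

/-- The `t`-initial ideal `tin_ω(J) ⊴ K[x]`. -/
noncomputable def tinIdeal (ω : Fin n → ℝ) (J : Ideal (MvPolynomial (Fin n) (Puiseux K))) :
    Ideal (MvPolynomial (Fin n) K) :=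
  Ideal.span ((tin ω) '' (J : Set (MvPolynomial (Fin n) (Puiseux K))))

/-- The tropical variety of an ideal `J ⊴ L[x]`: the set of weights `ω` whose
`t`-initial ideal contains no monomial. -/
noncomputable def Trop (J : Ideal (MvPolynomial (Fin n) (Puiseux K))) : Set (Fin n → ℝ) :=
  {ω | ∀ (β : Fin n →₀ ℕ) (c : K), c ≠ 0 → MvPolynomial.monomial β c ∉ tinIdeal ω J}


section auxlem
variable {K : Type*} [Field K] {n : ℕ}

lemma lc_mul {x y : HahnSeries ℚ K} (hx : x ≠ 0) (hy : y ≠ 0) :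
    (x * y).leadingCoeff = x.leadingCoeff * y.leadingCoeff := by
  rw [leadingCoeff_eq, order_mul hx hy, coeff_mul_order_add_order]

lemma lc_pow {x : HahnSeries ℚ K} (hx : x ≠ 0) (k : ℕ) :
    (x ^ k).leadingCoeff = x.leadingCoeff ^ k := by
  induction k with
  | zero => simpa using leadingCoeff_one
  | succ k ih => rw [pow_succ, lc_mul (pow_ne_zero _ hx) hx, ih, pow_succ]

lemma hahn_prod {ι : Type*} (s : Finset ι) (g : ι → HahnSeries ℚ K)
    (h : ∀ i ∈ s, g i ≠ 0) :
    (∏ i ∈ s, g i) ≠ 0 ∧ (∏ i ∈ s, g i).order = ∑ i ∈ s, (g i).order ∧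
      (∏ i ∈ s, g i).leadingCoeff = ∏ i ∈ s, (g i).leadingCoeff := by
  classical
  induction s using Finset.cons_induction with
  | empty => simpa using leadingCoeff_one
  | cons a s ha ih =>
    have hga : g a ≠ 0 := h a (Finset.mem_cons_self a s)
    obtain ⟨h0, ho, hl⟩ := ih (fun i hi => h i (Finset.mem_cons_of_mem hi))
    rw [Finset.prod_cons]
    refine ⟨mul_ne_zero hga h0, ?_, ?_⟩
    · rw [order_mul hga h0, ho, Finset.sum_cons]
    · rw [lc_mul hga h0, hl, Finset.prod_cons]

lemma eval_tin_zero (p : Fin n → Puiseux K) (hne : ∀ i, p i ≠ 0)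
    (f : MvPolynomial (Fin n) (Puiseux K)) (hf : MvPolynomial.eval p f = 0) :
    MvPolynomial.eval (fun i => (p i).val.leadingCoeff)
      (tin (fun i => -(((p i).val.order : ℝ))) f) = 0 := by
  classical
  set ω : Fin n → ℝ := fun i => -(((p i).val.order : ℝ)) with hω
  have hpv : ∀ i, (p i).val ≠ 0 := fun i h => hne i (Subtype.ext h)
  set P : (Fin n →₀ ℕ) → HahnSeries ℚ K := fun β => ∏ i, (p i).val ^ β i with hPdef
  set T : (Fin n →₀ ℕ) → HahnSeries ℚ K := fun β => (f.coeff β).val * P β with hTdef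
  have hP : ∀ β : Fin n →₀ ℕ, P β ≠ 0 ∧ (P β).order = ∑ i, (β i) • (p i).val.order ∧
      (P β).leadingCoeff = ∏ i, (p i).val.leadingCoeff ^ β i := by
    intro β
    obtain ⟨h0, ho, hl⟩ := hahn_prod Finset.univ (fun i => (p i).val ^ β i)
      (fun i _ => pow_ne_zero _ (hpv i))
    refine ⟨h0, ?_, ?_⟩
    · rw [ho]; exact Finset.sum_congr rfl fun i _ => order_pow _ _
    · rw [hl]; exact Finset.prod_congr rfl fun i _ => lc_pow (hpv i) _
  have hcne : ∀ β ∈ f.support, (f.coeff β).val ≠ 0 := fun β hβ h =>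
    MvPolynomial.mem_support_iff.mp hβ (Subtype.ext h)
  have hTne : ∀ β ∈ f.support, T β ≠ 0 := fun β hβ =>
    mul_ne_zero (hcne β hβ) (hP β).1
  have hord : ∀ β ∈ f.support, (T β).order
      = (f.coeff β).val.order + ∑ i, (β i) • (p i).val.order := by
    intro β hβ
    rw [hTdef, order_mul (hcne β hβ) (hP β).1, (hP β).2.1]
  have hwdeg : ∀ β ∈ f.support, wdeg ω β (f.coeff β) = -(((T β).order : ℚ) : ℝ) := by
    intro β hβ
    rw [wdeg, hord β hβ, hω]
    simp only [nsmul_eq_mul]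
    push_cast
    rw [show ∀ g : Fin n → ℝ, (∑ i, -((((p i).val.order : ℚ) : ℝ)) * g i)
        = -∑ i, g i * (((p i).val.order : ℚ) : ℝ) from fun g => by
      rw [← Finset.sum_neg_distrib]; exact Finset.sum_congr rfl fun i _ => by ring]
    ring
  have hkey : ∀ β ∈ f.support, ∀ β' ∈ f.support,
      (wdeg ω β' (f.coeff β') ≤ wdeg ω β (f.coeff β) ↔ (T β).order ≤ (T β').order) := by
    intro β hβ β' hβ'
    rw [hwdeg β hβ, hwdeg β' hβ', neg_le_neg_iff, Rat.cast_le]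
  by_cases hsupp : f.support.Nonempty
  · obtain ⟨β₀, hβ₀, hmin⟩ := f.support.exists_min_image (fun β => (T β).order) hsupp
    set m := (T β₀).order with hm
    set S := f.support.filter
      (fun β => ∀ β' ∈ f.support, wdeg ω β' (f.coeff β') ≤ wdeg ω β (f.coeff β)) with hS
    have hmem : ∀ β, β ∈ S ↔ β ∈ f.support ∧ (T β).order = m := by
      intro β
      rw [hS, Finset.mem_filter]
      constructor
      · rintro ⟨hβ, h⟩
        refine ⟨hβ, le_antisymm ((hkey β hβ β₀ hβ₀).mp (h β₀ hβ₀)) (hmin β hβ)⟩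
      · rintro ⟨hβ, h⟩
        refine ⟨hβ, fun β' hβ' => (hkey β hβ β' hβ').mpr ?_⟩
        rw [h]; exact hmin β' hβ'
    have hsum : ∑ β ∈ f.support, T β = 0 := by
      have h1 := MvPolynomial.eval_eq' p f
      rw [hf] at h1
      have h2 := congrArg (Subtype.val) h1.symm
      push_cast at h2
      simpa [hTdef, hPdef] using h2
    have hcm : ∑ β ∈ f.support, (T β).coeff m = 0 := by
      have h3 : (∑ β ∈ f.support, T β).coeff m = ∑ β ∈ f.support, (T β).coeff m :=
        map_sum (coeff.addMonoidHom m) T f.support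
      rw [← h3, hsum, coeff_zero]
    have hout : ∀ β ∈ f.support, β ∉ S → (T β).coeff m = 0 := by
      intro β hβ hβS
      have h1 : m ≤ (T β).order := hmin β hβ
      have h2 : (T β).order ≠ m := fun h => hβS ((hmem β).mpr ⟨hβ, h⟩)
      exact coeff_eq_zero_of_lt_order (lt_of_le_of_ne h1 (Ne.symm h2))
    rw [tin, map_sum]
    simp only [MvPolynomial.eval_monomial, Finsupp.prod_pow]
    rw [show f.support.filter
      (fun β => ∀ β' ∈ f.support, wdeg ω β' (f.coeff β') ≤ wdeg ω β (f.coeff β)) = S from rfl]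
    have hin : ∀ β ∈ S, (f.coeff β).val.coeff ((f.coeff β).val.order)
        * ∏ i, (p i).val.leadingCoeff ^ β i = (T β).coeff m := by
      intro β hβ
      obtain ⟨hβs, hβo⟩ := (hmem β).mp hβ
      calc (f.coeff β).val.coeff ((f.coeff β).val.order) * ∏ i, (p i).val.leadingCoeff ^ β i
          = (f.coeff β).val.leadingCoeff * (P β).leadingCoeff := by
            rw [(hP β).2.2, leadingCoeff_eq]
        _ = (T β).leadingCoeff := (lc_mul (hcne β hβs) (hP β).1).symm
        _ = (T β).coeff m := by rw [leadingCoeff_eq, hβo]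
    rw [Finset.sum_congr rfl hin, Finset.sum_subset (Finset.filter_subset _ _) hout, hcm]
  · rw [Finset.not_nonempty_iff_eq_empty] at hsupp
    simp [tin, hsupp]

end auxlem

/-- If `p ∈ V(J)` has all coordinates nonzero, then `-val(p) ∈ Trop(J)`. -/
theorem neg_val_mem_trop {K : Type*} [Field K] {n : ℕ}
    (J : Ideal (MvPolynomial (Fin n) (Puiseux K))) (p : Fin n → Puiseux K)
    (hp : ∀ f ∈ J, MvPolynomial.eval p f = 0) (hne : ∀ i, p i ≠ 0) :
    (fun i => -(((p i).val.order : ℝ))) ∈ Trop J := by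
  classical
  intro β c hc hmem
  set a : Fin n → K := fun i => (p i).val.leadingCoeff with ha
  have haz : ∀ i, a i ≠ 0 := fun i =>
    leadingCoeff_ne_zero.mpr (fun h => hne i (Subtype.ext h))
  have hker : tinIdeal (fun i => -(((p i).val.order : ℝ))) J ≤
      RingHom.ker (MvPolynomial.eval a) := by
    rw [tinIdeal, Ideal.span_le]
    rintro g ⟨f, hfJ, rfl⟩
    exact eval_tin_zero p hne f (hp f hfJ)
  have h0 : MvPolynomial.eval a (MvPolynomial.monomial β c) = 0 := hker hmem
  rw [MvPolynomial.eval_monomial, Finsupp.prod_pow] at h0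
  exact (mul_ne_zero hc (Finset.prod_ne_zero_iff.mpr fun i _ => pow_ne_zero _ (haz i))) h0
end

section
/- Let $K$ be an infinite field, $R$ a commutative ring containing $K$, and $J \trianglelefteq R[x_1,\ldots,x_n]$ an ideal with finitely many minimal primes. Then there is a Zariski open dense subset $U$ of the space $V_0 = \{a_0 + a_1 x_1 + \cdots + a_n x_n : a_i \in K\}$ of affine-linear polynomials with coefficients in $K$, such that every $f \in U$ lies in no minimal prime of $J$. -/
open MvPolynomial

/-- The affine-linear substitution map as a `K`-linear map. -/
noncomputable def affineLinearMap (K R : Type*) [Field K] [CommRing R] [Algebra K R]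
    (n : ℕ) : (Fin (n + 1) → K) →ₗ[K] MvPolynomial (Fin n) R where
  toFun a := MvPolynomial.C (algebraMap K R (a 0)) +
      ∑ i : Fin n, MvPolynomial.C (algebraMap K R (a i.succ)) * MvPolynomial.X i
  map_add' a b := by
    simp only [Pi.add_apply, map_add, add_mul, Finset.sum_add_distrib]
    ring
  map_smul' c a := by
    simp only [Pi.smul_apply, smul_eq_mul, map_mul, RingHom.id_apply, Algebra.smul_def,
      MvPolynomial.algebraMap_eq, Finset.mul_sum, mul_add]
    ring_nf
    simp [mul_assoc, Finset.mul_sum, mul_comm]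

/-- Over an infinite field `K ⊆ R`, there is a Zariski open dense subset (the
nonvanishing locus of a nonzero polynomial `g` in the coefficients) of the
space of affine-linear polynomials `a₀ + a₁x₁ + ⋯ + aₙxₙ` with `aᵢ ∈ K`, whose
members avoid every minimal prime of a given ideal `J ⊴ R[x₁,…,xₙ]` with
finitely many minimal primes. -/
theorem generic_linear_form_avoids_minimal_primes {K R : Type*} [Field K] [Infinite K]
    [CommRing R] [Algebra K R] {n : ℕ} (J : Ideal (MvPolynomial (Fin n) R))
    (hfin : J.minimalPrimes.Finite) :
    ∃ g : MvPolynomial (Fin (n + 1)) K, g ≠ 0 ∧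
      ∀ a : Fin (n + 1) → K, MvPolynomial.eval a g ≠ 0 →
        ∀ P ∈ J.minimalPrimes,
          (MvPolynomial.C (algebraMap K R (a 0)) +
            ∑ i : Fin n, MvPolynomial.C (algebraMap K R (a i.succ)) *
              MvPolynomial.X i) ∉ P := by
  classical
  set L := affineLinearMap K R n with hL
  -- for each minimal prime, find a nonzero dual functional killing the preimage
  have key : ∀ P ∈ J.minimalPrimes, ∃ φ : Module.Dual K (Fin (n + 1) → K),
      φ ≠ 0 ∧ ∀ a : Fin (n + 1) → K, L a ∈ P → φ a = 0 := by
    intro P hP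
    have hPprime : P.IsPrime := hP.1.1
    set W : Submodule K (Fin (n + 1) → K) :=
      Submodule.comap L (Submodule.restrictScalars K P) with hW
    have hWlt : W < ⊤ := by
      rw [lt_top_iff_ne_top]
      intro h
      have h1 : L (Pi.single 0 1) ∈ P := by
        have : (Pi.single 0 1 : Fin (n + 1) → K) ∈ W := h ▸ Submodule.mem_top
        exact this
      have hL1 : L (Pi.single 0 1) = 1 := by
        simp [hL, affineLinearMap, Pi.single_eq_same, Pi.single_eq_of_ne (Fin.succ_ne_zero _)]
      rw [hL1] at h1
      exact hPprime.ne_top (Ideal.eq_top_of_isUnit_mem P h1 isUnit_one)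
    obtain ⟨φ, hφne, hφ⟩ := W.exists_dual_map_eq_bot_of_lt_top hWlt inferInstance
    refine ⟨φ, hφne, fun a ha => ?_⟩
    have : φ a ∈ W.map φ := Submodule.mem_map_of_mem (by exact ha)
    rwa [hφ, Submodule.mem_bot] at this
  choose φ hφne hφ using key
  -- turn each functional into a linear polynomial
  set gp : ∀ P ∈ J.minimalPrimes, MvPolynomial (Fin (n + 1)) K :=
    fun P hP => ∑ i : Fin (n + 1),
      MvPolynomial.C (φ P hP (fun j => if i = j then 1 else 0)) * MvPolynomial.X i with hgp
  have heval : ∀ (P) (hP : P ∈ J.minimalPrimes) (a : Fin (n + 1) → K),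
      MvPolynomial.eval a (gp P hP) = φ P hP a := by
    intro P hP a
    rw [hgp]
    simp only [map_sum, map_mul, eval_C, eval_X]
    rw [LinearMap.pi_apply_eq_sum_univ (φ P hP) a]
    simp [mul_comm]
  have hgpne : ∀ (P) (hP : P ∈ J.minimalPrimes), gp P hP ≠ 0 := by
    intro P hP h0
    apply hφne P hP
    apply LinearMap.ext
    intro a
    have := heval P hP a
    rw [h0] at this
    simpa using this.symm
  refine ⟨∏ P ∈ hfin.toFinset.attach, gp P.1 (hfin.mem_toFinset.mp P.2),
    Finset.prod_ne_zero_iff.mpr (fun P _ => hgpne _ _), ?_⟩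
  intro a ha P hP hmem
  rw [map_prod] at ha
  have hPmem : (⟨P, hfin.mem_toFinset.mpr hP⟩ : {x // x ∈ hfin.toFinset}) ∈ hfin.toFinset.attach :=
    Finset.mem_attach _ _
  have := Finset.prod_ne_zero_iff.mp ha _ hPmem
  rw [heval] at this
  exact this (hφ P hP a hmem)
end

section
/- Let $I \trianglelefteq R_N[x_1,\ldots,x_n]$ be an ideal with $1 \in \mathrm{IN}_0(I)$ (equivalently, $I$ contains an element of the form $1 + t^{1/N} p$). Then $R_N[\underline{x}]/I \cong L_N[\underline{x}]/\langle I \rangle_{L_N[\underline{x}]}$, where $L_N = \mathrm{Quot}(R_N)$; in particular these quotients have the same Krull dimension. -/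
variable {K : Type*} [Field K] {n : ℕ}

/-- The `t`-order of `f ∈ K[[t]][x₁,…,xₙ]`: the minimal power of `t` occurring
in `f` (junk value `0` for `f = 0`). -/
noncomputable def tOrder (f : MvPolynomial (Fin n) (PowerSeries K)) : ℕ :=
  sInf {k | ∃ β, (PowerSeries.coeff (R := K) k) (f.coeff β) ≠ 0}

/-- The initial form `IN_0(f)` with respect to the weight vector
`(-1,0,…,0)`: the sum of the terms of `f` of minimal `t`-order. -/
noncomputable def IN0 (f : MvPolynomial (Fin n) (PowerSeries K)) :
    MvPolynomial (Fin n) (PowerSeries K) :=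
  ∑ β ∈ f.support,
    MvPolynomial.monomial β
      ((PowerSeries.monomial (R := K) (tOrder f)) ((PowerSeries.coeff (R := K) (tOrder f)) (f.coeff β)))

/-- The initial ideal `IN_0(I)`, generated by the initial forms of elements
of `I`. -/
noncomputable def IN0Ideal (I : Ideal (MvPolynomial (Fin n) (PowerSeries K))) :
    Ideal (MvPolynomial (Fin n) (PowerSeries K)) :=
  Ideal.span (IN0 '' (I : Set (MvPolynomial (Fin n) (PowerSeries K))))

/-- The `t`-initial form `tin_0(f) ∈ K[x]`: the terms of minimal `t`-order
with `t` set to `1`. -/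
noncomputable def tin0 (f : MvPolynomial (Fin n) (PowerSeries K)) :
    MvPolynomial (Fin n) K :=
  ∑ β ∈ f.support,
    MvPolynomial.monomial β ((PowerSeries.coeff (R := K) (tOrder f)) (f.coeff β))

/-- The `t`-initial ideal `tin_0(I) ⊴ K[x]`. -/
noncomputable def tin0Ideal (I : Ideal (MvPolynomial (Fin n) (PowerSeries K))) :
    Ideal (MvPolynomial (Fin n) K) :=
  Ideal.span (tin0 '' (I : Set (MvPolynomial (Fin n) (PowerSeries K))))

/-- Reducing the coefficients of an initial form modulo `t`: this yields the
reduction of `f` itself if `tOrder f = 0`, and `0` otherwise. -/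
lemma map_constantCoeff_IN0 (f : MvPolynomial (Fin n) (PowerSeries K)) :
    MvPolynomial.map (PowerSeries.constantCoeff (R := K)) (IN0 f)
      = if tOrder f = 0 then MvPolynomial.map (PowerSeries.constantCoeff (R := K)) f else 0 := by
  classical
  rw [IN0, map_sum]
  by_cases h : tOrder f = 0
  · simp only [h, if_pos]
    conv_rhs => rw [← MvPolynomial.support_sum_monomial_coeff f, map_sum]
    refine Finset.sum_congr rfl fun β _ => ?_
    rw [MvPolynomial.map_monomial, MvPolynomial.map_monomial]
    congr 1
    simp [PowerSeries.coeff_monomial, PowerSeries.coeff_zero_eq_constantCoeff]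
  · simp only [h, if_neg, if_false]
    refine Finset.sum_eq_zero fun β _ => ?_
    rw [MvPolynomial.map_monomial]
    convert MvPolynomial.monomial_zero (s := β)
    rw [← PowerSeries.coeff_zero_eq_constantCoeff_apply, PowerSeries.coeff_monomial]
    simp [Ne.symm h]

/-- Every element of the initial ideal agrees modulo `t` with an element of `I`. -/
lemma exists_eps_eq (I : Ideal (MvPolynomial (Fin n) (PowerSeries K)))
    {y : MvPolynomial (Fin n) (PowerSeries K)} (hy : y ∈ IN0Ideal I) :
    ∃ h ∈ I, MvPolynomial.map (PowerSeries.constantCoeff (R := K)) h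
      = MvPolynomial.map (PowerSeries.constantCoeff (R := K)) y := by
  refine Submodule.span_induction ?_ ?_ ?_ ?_ hy
  · rintro x ⟨f, hf, rfl⟩
    by_cases h : tOrder f = 0
    · exact ⟨f, hf, by rw [map_constantCoeff_IN0, if_pos h]⟩
    · exact ⟨0, I.zero_mem, by rw [map_constantCoeff_IN0, if_neg h, map_zero]⟩
  · exact ⟨0, I.zero_mem, rfl⟩
  · rintro x y _ _ ⟨h₁, h₁I, e₁⟩ ⟨h₂, h₂I, e₂⟩
    exact ⟨h₁ + h₂, I.add_mem h₁I h₂I, by rw [map_add, map_add, e₁, e₂]⟩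
  · rintro a x _ ⟨h, hI, e⟩
    exact ⟨a • h, I.smul_mem a hI, by
      rw [smul_eq_mul, smul_eq_mul, map_mul, map_mul, e]⟩

set_option synthInstance.maxHeartbeats 800000 in
/-- If `1 ∈ IN_0(I)` then `t` becomes invertible modulo `I`. -/
lemma isUnit_mk_CX (I : Ideal (MvPolynomial (Fin n) (PowerSeries K)))
    (h1 : (1 : MvPolynomial (Fin n) (PowerSeries K)) ∈ IN0Ideal I) :
    IsUnit (Ideal.Quotient.mk I (MvPolynomial.C (PowerSeries.X : PowerSeries K))) := by
  obtain ⟨h, hI, he⟩ := exists_eps_eq I h1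
  rw [map_one] at he
  have hdvd : MvPolynomial.C (PowerSeries.X : PowerSeries K) ∣ h - 1 := by
    rw [MvPolynomial.C_dvd_iff_dvd_coeff]
    intro i
    rw [PowerSeries.X_dvd_iff]
    have : (MvPolynomial.map (PowerSeries.constantCoeff (R := K))) (h - 1) = 0 := by
      rw [map_sub, he, map_one, sub_self]
    calc PowerSeries.constantCoeff (R := K) ((h - 1).coeff i)
        = ((MvPolynomial.map (PowerSeries.constantCoeff (R := K))) (h - 1)).coeff i :=
          (MvPolynomial.coeff_map _ _ _).symm
      _ = 0 := by rw [this, MvPolynomial.coeff_zero]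
  obtain ⟨p, hp⟩ := hdvd
  refine IsUnit.of_mul_eq_one (-(Ideal.Quotient.mk I p)) ?_
  have : Ideal.Quotient.mk I h = 0 := Ideal.Quotient.eq_zero_iff_mem.mpr hI
  have hp' := congrArg (Ideal.Quotient.mk I) hp
  rw [map_sub, this, map_mul, zero_sub, map_one] at hp'
  linear_combination hp'

/-- The fraction field of `K[[t]]` is already obtained by inverting `t`. -/
lemma isLocalization_powers_X (K : Type*) [Field K] :
    IsLocalization (Submonoid.powers (PowerSeries.X : PowerSeries K))
      (FractionRing (PowerSeries K)) where
  map_units := by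
    rintro ⟨y, k, rfl⟩
    have hX : (PowerSeries.X : PowerSeries K) ^ k ≠ 0 :=
      pow_ne_zero _ PowerSeries.X_ne_zero
    rw [isUnit_iff_ne_zero]
    exact fun h => hX (IsFractionRing.injective (PowerSeries K)
      (FractionRing (PowerSeries K)) (by rw [h, map_zero]))
  surj := by
    intro z
    obtain ⟨⟨y, s⟩, e⟩ := IsLocalization.surj (nonZeroDivisors (PowerSeries K)) z
    have hs : (s : PowerSeries K) ≠ 0 := nonZeroDivisors.ne_zero s.2
    obtain ⟨v, hv⟩ := PowerSeries.isUnit_divided_by_X_pow_order hs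
    set d := (PowerSeries.order (s : PowerSeries K)).lift
      (PowerSeries.order_finite_iff_ne_zero.mpr hs)
    have hfac : (PowerSeries.X : PowerSeries K) ^ d * v = s := by
      rw [hv]; convert PowerSeries.X_pow_order_mul_divXPowOrder (f := (s : PowerSeries K)) using 3
      exact ENat.lift_eq_toNat_of_lt_top (PowerSeries.order_finite_iff_ne_zero.mpr hs)
    have hXd : (PowerSeries.X : PowerSeries K) ^ d = (s : PowerSeries K) * ↑v⁻¹ := by
      rw [← hfac, mul_assoc]; simp
    refine ⟨⟨y * ↑v⁻¹, ⟨_, ⟨d, rfl⟩⟩⟩, ?_⟩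
    simp only
    rw [hXd, map_mul, ← mul_assoc, e, ← map_mul]
  exists_of_eq := by
    intro a b h
    exact ⟨1, by rw [IsFractionRing.injective (PowerSeries K) (FractionRing (PowerSeries K)) h]⟩

attribute [local instance] MvPolynomial.algebraMvPolynomial

set_option synthInstance.maxHeartbeats 800000 in
set_option maxHeartbeats 1000000 in
/-- The ring-equivalence part of the theorem. -/
lemma quotient_equiv_aux (I : Ideal (MvPolynomial (Fin n) (PowerSeries K)))
    (h1 : (1 : MvPolynomial (Fin n) (PowerSeries K)) ∈ IN0Ideal I) :
    Nonempty ((MvPolynomial (Fin n) (PowerSeries K) ⧸ I) ≃+*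
        (MvPolynomial (Fin n) (FractionRing (PowerSeries K)) ⧸
          I.map (MvPolynomial.map
            (algebraMap (PowerSeries K) (FractionRing (PowerSeries K)))))) := by
  haveI := isLocalization_powers_X K
  set M : Submonoid (MvPolynomial (Fin n) (PowerSeries K)) :=
    (Submonoid.powers (PowerSeries.X : PowerSeries K)).map MvPolynomial.C with hM
  haveI : IsLocalization M (MvPolynomial (Fin n) (FractionRing (PowerSeries K))) :=
    MvPolynomial.isLocalization _ _
  set φ : MvPolynomial (Fin n) (PowerSeries K) →+*
      MvPolynomial (Fin n) (FractionRing (PowerSeries K)) :=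
    MvPolynomial.map (algebraMap (PowerSeries K) (FractionRing (PowerSeries K))) with hφ
  have hφa : φ = algebraMap (MvPolynomial (Fin n) (PowerSeries K))
      (MvPolynomial (Fin n) (FractionRing (PowerSeries K))) := rfl
  set J := I.map φ with hJ
  have hunit : ∀ y : M, IsUnit (Ideal.Quotient.mk I (y : MvPolynomial (Fin n) (PowerSeries K))) := by
    rintro ⟨y, x, ⟨k, rfl⟩, rfl⟩
    show IsUnit (Ideal.Quotient.mk I (MvPolynomial.C (PowerSeries.X ^ k)))
    rw [map_pow, map_pow]
    exact (isUnit_mk_CX I h1).pow k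
  set ψ : MvPolynomial (Fin n) (FractionRing (PowerSeries K)) →+*
      MvPolynomial (Fin n) (PowerSeries K) ⧸ I :=
    IsLocalization.lift (M := M) (P := MvPolynomial (Fin n) (PowerSeries K) ⧸ I) hunit with hψ
  have hψφ : ∀ r, ψ (φ r) = Ideal.Quotient.mk I r := by
    intro r
    rw [hφa]
    exact IsLocalization.lift_eq hunit r
  have hJker : J ≤ RingHom.ker ψ := by
    rw [hJ, Ideal.map_le_iff_le_comap]
    intro r hr
    simp only [Ideal.mem_comap, RingHom.mem_ker]
    rw [hψφ r, Ideal.Quotient.eq_zero_iff_mem]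
    exact hr
  set F : (MvPolynomial (Fin n) (PowerSeries K) ⧸ I) →+*
      (MvPolynomial (Fin n) (FractionRing (PowerSeries K)) ⧸ J) :=
    Ideal.quotientMap J φ Ideal.le_comap_map with hF
  set G : (MvPolynomial (Fin n) (FractionRing (PowerSeries K)) ⧸ J) →+*
      (MvPolynomial (Fin n) (PowerSeries K) ⧸ I) :=
    Ideal.Quotient.lift J ψ (fun a ha => RingHom.mem_ker.mp (hJker ha)) with hG
  refine ⟨RingEquiv.ofRingHom F G ?_ ?_⟩
  · apply Ideal.Quotient.ringHom_ext
    apply IsLocalization.ringHom_ext M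
    refine RingHom.ext fun r => ?_
    simp only [RingHom.comp_apply, RingHom.coe_comp, Function.comp_apply, RingHom.id_apply]
    rw [← hφa, hG, Ideal.Quotient.lift_mk, hψφ r, hF, Ideal.quotientMap_mk]
  · apply Ideal.Quotient.ringHom_ext
    refine RingHom.ext fun r => ?_
    simp only [RingHom.comp_apply, RingHom.coe_comp, Function.comp_apply, RingHom.id_apply]
    rw [Ideal.quotientMap_mk, hG, Ideal.Quotient.lift_mk, hψφ r]

/-- If `1 ∈ IN_0(I)`, then `R_N[x]/I ≅ L_N[x]/⟨I⟩` where `L_N = Quot(R_N)` is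
the quotient field of the power series ring, and in particular the Krull
dimensions agree. -/
theorem quotient_equiv_of_one_mem_IN0 {K : Type*} [Field K] {n : ℕ}
    (I : Ideal (MvPolynomial (Fin n) (PowerSeries K)))
    (h1 : (1 : MvPolynomial (Fin n) (PowerSeries K)) ∈ IN0Ideal I) :
    Nonempty ((MvPolynomial (Fin n) (PowerSeries K) ⧸ I) ≃+*
        (MvPolynomial (Fin n) (FractionRing (PowerSeries K)) ⧸
          I.map (MvPolynomial.map
            (algebraMap (PowerSeries K) (FractionRing (PowerSeries K)))))) ∧
      ringKrullDim (MvPolynomial (Fin n) (PowerSeries K) ⧸ I) =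
        ringKrullDim (MvPolynomial (Fin n) (FractionRing (PowerSeries K)) ⧸
          I.map (MvPolynomial.map
            (algebraMap (PowerSeries K) (FractionRing (PowerSeries K))))) := by
  obtain ⟨e⟩ := quotient_equiv_aux I h1
  exact ⟨⟨e⟩, ringKrullDim_eq_of_ringEquiv e⟩
end
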